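/- arXiv:math/0202057 — 6 statements merged into one kernel-verified Lean document; each statement's English description precedes it below -/
import Mathlib

section
/- Let V be a topological vector space and V1, V2 closed subspaces with V1 ∩ V2 finite-dimensional and V1 + V2 closed of finite codimension (i.e., V1, V2 are quasi-complementary with excess d = dim(V1∩V2) − codim(V1+V2)). If V1' is a closed subspace containing V1 with dim(V1'/V1) = 1, then V1' and V2 are quasi-complementary with excess d + 1. -/
/-!
Write `V1' = V1 ⊔ ℂ ∙ x` with `x ∉ V1`. If `x ∈ V1 ⊔ V2`, we may replace `x` by its
`V2`-component `b`; then the sum does not change and, by modularity,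
`V1' ⊓ V2 = (V1 ⊓ V2) ⊔ ℂ ∙ b` gains one dimension. If `x ∉ V1 ⊔ V2`, modularity gives
`V1' ⊓ V2 = V1 ⊓ V2`, while the sum becomes `(V1 ⊔ V2) ⊔ ℂ ∙ x`, which is still closed and has
codimension one less.
-/

open Module

theorem sup_inf_eq_inf_of_disjoint_sup {α : Type*} [Lattice α] [OrderBot α] [IsModularLattice α]
    {a b c : α} (h : Disjoint c (a ⊔ b)) : (a ⊔ c) ⊓ b = a ⊓ b := by
  refine le_antisymm (le_inf ?_ inf_le_right) (inf_le_inf_right _ le_sup_left)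
  calc (a ⊔ c) ⊓ b ≤ (a ⊔ c) ⊓ (a ⊔ b) := inf_le_inf_left _ le_sup_right
    _ = a ⊔ c ⊓ (a ⊔ b) := sup_inf_assoc_of_le _ le_sup_left
    _ = a := by rw [h.eq_bot, sup_bot_eq]

namespace Submodule

variable {K V : Type*} [DivisionRing K] [AddCommGroup V] [Module K V]

theorem exists_notMem_eq_sup_span_singleton_of_finrank_quotient_eq_one {p q : Submodule K V}
    (hpq : p ≤ q) (h : finrank K (q ⧸ p.comap q.subtype) = 1) :
    ∃ x ∉ p, q = p ⊔ K ∙ x := by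
  obtain ⟨v, hv0, hv⟩ := finrank_eq_one_iff'.mp h
  obtain ⟨x, rfl⟩ := Quotient.mk_surjective _ v
  refine ⟨x, fun hx => hv0 ((Quotient.mk_eq_zero _).mpr hx), le_antisymm ?_ ?_⟩
  · intro y hy
    obtain ⟨c, hc⟩ := hv (Quotient.mk ⟨y, hy⟩)
    rw [← Quotient.mk_smul, Quotient.eq] at hc
    have : y = (y - c • x) + c • (x : V) := by abel
    rw [this]
    exact add_mem (mem_sup_left (by simpa using p.neg_mem hc))
      (mem_sup_right (smul_mem _ c (mem_span_singleton_self _)))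
  · exact sup_le hpq (span_singleton_le_iff_mem _ _ |>.mpr x.2)

theorem sup_span_singleton_add_of_mem {p : Submodule K V} {a : V} (ha : a ∈ p) (b : V) :
    p ⊔ K ∙ (a + b) = p ⊔ K ∙ b := by
  have key : ∀ {a b : V}, a ∈ p → p ⊔ K ∙ (a + b) ≤ p ⊔ K ∙ b := fun ha =>
    sup_le le_sup_left <| (span_singleton_le_iff_mem _ _).mpr <|
      add_mem (mem_sup_left ha) (mem_sup_right (mem_span_singleton_self _))
  refine le_antisymm (key ha) ?_
  simpa using key (b := a + b) (p.neg_mem ha)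

theorem finrank_sup_span_singleton_of_notMem {p : Submodule K V} [FiniteDimensional K p] {v : V}
    (hv : v ∉ p) : finrank K ↥(p ⊔ K ∙ v) = finrank K p + 1 := by
  have h := finrank_sup_add_finrank_inf_eq p (K ∙ v)
  rwa [(disjoint_span_singleton_of_notMem hv).eq_bot, finrank_bot, add_zero,
    finrank_span_singleton (by rintro rfl; exact hv p.zero_mem)] at h

theorem finiteDimensional_quotient_of_le {W W' : Submodule K V} [FiniteDimensional K (V ⧸ W)]
    (h : W ≤ W') : FiniteDimensional K (V ⧸ W') :=
  Module.Finite.of_surjective _ (factor_surjective h)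

theorem finrank_quotient_sup_span_singleton_add_one {W : Submodule K V}
    [FiniteDimensional K (V ⧸ W)] {v : V} (hv : v ∉ W) :
    finrank K (V ⧸ (W ⊔ K ∙ v)) + 1 = finrank K (V ⧸ W) := by
  have h := finrank_quotient_add_finrank ((K ∙ v).map W.mkQ)
  have hv' : W.mkQ v ≠ 0 := by simpa [Quotient.mk_eq_zero] using hv
  rwa [(quotientQuotientEquivQuotientSup W (K ∙ v)).finrank_eq, map_span, Set.image_singleton,
    finrank_span_singleton hv'] at h

end Submodule

open Submodule in
theorem stmt0_general {V : Type*} [AddCommGroup V] [Module ℂ V] [TopologicalSpace V]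
    [IsTopologicalAddGroup V] [ContinuousSMul ℂ V]
    (V1 V2 V1' : Submodule ℂ V)
    (hfin : FiniteDimensional ℂ ↥(V1 ⊓ V2))
    (hclosed : IsClosed ((V1 ⊔ V2 : Submodule ℂ V) : Set V))
    (hcofin : FiniteDimensional ℂ (V ⧸ (V1 ⊔ V2)))
    (d : ℤ)
    (hd : (Module.finrank ℂ ↥(V1 ⊓ V2) : ℤ) - Module.finrank ℂ (V ⧸ (V1 ⊔ V2)) = d)
    (hle : V1 ≤ V1')
    (hdim : Module.finrank ℂ (↥V1' ⧸ Submodule.comap V1'.subtype V1) = 1) :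
    FiniteDimensional ℂ ↥(V1' ⊓ V2) ∧
      IsClosed ((V1' ⊔ V2 : Submodule ℂ V) : Set V) ∧
      FiniteDimensional ℂ (V ⧸ (V1' ⊔ V2)) ∧
      (Module.finrank ℂ ↥(V1' ⊓ V2) : ℤ) - Module.finrank ℂ (V ⧸ (V1' ⊔ V2)) = d + 1 := by
  obtain ⟨x, hxV1, rfl⟩ := exists_notMem_eq_sup_span_singleton_of_finrank_quotient_eq_one hle hdim
  by_cases hx : x ∈ V1 ⊔ V2
  · obtain ⟨a, ha, b, hb, rfl⟩ := mem_sup.mp hx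
    have hbV1 : b ∉ V1 := fun hbV1 => hxV1 (add_mem ha hbV1)
    have hbV2 : ℂ ∙ b ≤ V2 := (span_singleton_le_iff_mem _ _).mpr hb
    have hsup : V1 ⊔ ℂ ∙ b ⊔ V2 = V1 ⊔ V2 := by rw [sup_assoc, sup_eq_right.mpr hbV2]
    have hinf : (V1 ⊔ ℂ ∙ b) ⊓ V2 = V1 ⊓ V2 ⊔ ℂ ∙ b := by
      rw [sup_comm, sup_inf_assoc_of_le _ hbV2, sup_comm]
    have hrank := finrank_sup_span_singleton_of_notMem (fun h : b ∈ V1 ⊓ V2 => hbV1 h.1)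
    rw [sup_span_singleton_add_of_mem ha, hsup, hinf]
    exact ⟨inferInstance, hclosed, hcofin, by rw [hrank]; push_cast; omega⟩
  · have hinf : (V1 ⊔ ℂ ∙ x) ⊓ V2 = V1 ⊓ V2 :=
      sup_inf_eq_inf_of_disjoint_sup (disjoint_span_singleton_of_notMem hx).symm
    have hrank := finrank_quotient_sup_span_singleton_add_one hx
    rw [hinf, sup_right_comm]
    exact ⟨hfin, isClosed_sup_finiteDimensional _ _ hclosed,
      finiteDimensional_quotient_of_le le_sup_left, by omega⟩

/-- Two closed subspaces `S₁, S₂` of a topological vector space are *quasi-complementary*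
if `S₁ ⊓ S₂` is finite-dimensional and `S₁ ⊔ S₂` is closed of finite codimension;
their *excess* is `dim (S₁ ⊓ S₂) - codim (S₁ ⊔ S₂)`. -/
theorem stmt0 {V : Type*} [AddCommGroup V] [Module ℂ V] [TopologicalSpace V]
    [IsTopologicalAddGroup V] [ContinuousSMul ℂ V]
    (V1 V2 V1' : Submodule ℂ V)
    (h1c : IsClosed (V1 : Set V)) (h2c : IsClosed (V2 : Set V))
    (h1'c : IsClosed (V1' : Set V))
    (hfin : FiniteDimensional ℂ ↥(V1 ⊓ V2))
    (hclosed : IsClosed ((V1 ⊔ V2 : Submodule ℂ V) : Set V))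
    (hcofin : FiniteDimensional ℂ (V ⧸ (V1 ⊔ V2)))
    (d : ℤ)
    (hd : (Module.finrank ℂ ↥(V1 ⊓ V2) : ℤ) - Module.finrank ℂ (V ⧸ (V1 ⊔ V2)) = d)
    (hle : V1 ≤ V1')
    (hdim : Module.finrank ℂ (↥V1' ⧸ Submodule.comap V1'.subtype V1) = 1) :
    FiniteDimensional ℂ ↥(V1' ⊓ V2) ∧
      IsClosed ((V1' ⊔ V2 : Submodule ℂ V) : Set V) ∧
      FiniteDimensional ℂ (V ⧸ (V1' ⊔ V2)) ∧
      (Module.finrank ℂ ↥(V1' ⊓ V2) : ℤ) - Module.finrank ℂ (V ⧸ (V1' ⊔ V2)) = d + 1 :=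
  stmt0_general V1 V2 V1' hfin hclosed hcofin d hd hle hdim
end

section
/- Let H1, H2 be Hilbert spaces, H = H1 ⊕ H2, and let V1 be the graph of a closed (possibly unbounded, densely defined) operator A1: H1 → H2 and V2 the graph of a closed operator A2: H2 → H1. If the composition A1 ∘ A2 is a compact operator (i.e., its graph is contained in the graph of a compact operator H2 → H2), then V1 ∩ V2 is finite-dimensional. -/
/-- Abstract finiteness lemma: if `V1 ⊂ H1 ⊕ H2` is the graph of a closed (densely defined)
operator `A1 : H1 → H2`, `V2` is the graph `{(A2 h, h)}` of a closed operator `A2 : H2 → H1`,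
and the composition `A1 ∘ A2` is compact (its graph is contained in the graph of a compact
everywhere-defined operator `B : H2 → H2`), then `V1 ∩ V2` is finite-dimensional. -/
theorem stmt2 {H1 H2 : Type*}
    [NormedAddCommGroup H1] [InnerProductSpace ℂ H1] [CompleteSpace H1]
    [NormedAddCommGroup H2] [InnerProductSpace ℂ H2] [CompleteSpace H2]
    (V1 V2 : Submodule ℂ (H1 × H2))
    (h1closed : IsClosed (V1 : Set (H1 × H2))) (h2closed : IsClosed (V2 : Set (H1 × H2)))
    -- `V1` is the graph of a partial operator `H1 → H2`:
    (h1graph : ∀ y : H2, ((0 : H1), y) ∈ V1 → y = 0)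
    -- `V2` is the graph of a partial operator `H2 → H1` (as a subspace `{(A2 h, h)}`):
    (h2graph : ∀ x : H1, (x, (0 : H2)) ∈ V2 → x = 0)
    -- dense domains:
    (h1dense : Dense (Prod.fst '' (V1 : Set (H1 × H2))))
    (h2dense : Dense (Prod.snd '' (V2 : Set (H1 × H2))))
    -- the composition `A1 ∘ A2` is contained in the graph of a compact operator `B`:
    (B : H2 →L[ℂ] H2) (hB : IsCompactOperator ⇑B)
    (hcomp : ∀ (h k : H2) (m : H1), (m, h) ∈ V2 → (m, k) ∈ V1 → B h = k) :
    FiniteDimensional ℂ ↥(V1 ⊓ V2) := by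
  -- the fixed-point space of B
  set S : Submodule ℂ H2 := LinearMap.ker ((B : H2 →ₗ[ℂ] H2) - LinearMap.id) with hS
  have hSmem : ∀ x : H2, x ∈ S ↔ B x = x := by
    intro x
    simp [hS, LinearMap.mem_ker, sub_eq_zero]
  have hSclosed : IsClosed (S : Set H2) := by
    have : (S : Set H2) = {x | B x = x} := by
      ext x; exact hSmem x
    rw [this]
    exact isClosed_eq B.continuous continuous_id
  -- S is finite dimensional by Riesz
  have hSfin : FiniteDimensional ℂ S := by
    obtain ⟨K, hK, hKmem⟩ := hB
    obtain ⟨r, hr, hball⟩ := Metric.mem_nhds_iff.mp hKmem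
    have hrpos : (0 : ℝ) < r / 2 := by linarith
    apply FiniteDimensional.of_isCompact_closedBall₀ ℂ hrpos
    have hsub : ((↑) : S → H2) '' Metric.closedBall 0 (r / 2) ⊆
        (S : Set H2) ∩ closure K := by
      rintro x ⟨y, hy, rfl⟩
      refine ⟨y.2, subset_closure ?_⟩
      have hyb : (y : H2) ∈ Metric.ball (0 : H2) r := by
        simp only [Metric.mem_closedBall, dist_zero_right] at hy
        simp only [Metric.mem_ball, dist_zero_right]
        calc ‖(y : H2)‖ = ‖y‖ := rfl
          _ ≤ r / 2 := hy
          _ < r := by linarith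
      have : B (y : H2) ∈ K := hball hyb
      rwa [(hSmem _).mp y.2] at this
    have himg : ((↑) : S → H2) '' Metric.closedBall 0 (r / 2) =
        (S : Set H2) ∩ Metric.closedBall (0 : H2) (r / 2) := by
      ext x
      constructor
      · rintro ⟨y, hy, rfl⟩
        exact ⟨y.2, by simpa [Metric.mem_closedBall, dist_zero_right] using hy⟩
      · rintro ⟨hx, hx2⟩
        exact ⟨⟨x, hx⟩, by simpa [Metric.mem_closedBall, dist_zero_right] using hx2, rfl⟩
    have hcpt : IsCompact (((↑) : S → H2) '' Metric.closedBall 0 (r / 2)) := by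
      refine IsCompact.of_isClosed_subset (hK.closure.inter_left hSclosed) ?_ hsub
      rw [himg]
      exact hSclosed.inter Metric.isClosed_closedBall
    rw [Topology.IsEmbedding.isCompact_iff (Topology.IsEmbedding.subtypeVal)]
    exact hcpt
  -- inject V1 ⊓ V2 into S via the second coordinate
  let f : ↥(V1 ⊓ V2) →ₗ[ℂ] S :=
    { toFun := fun x => ⟨(x : H1 × H2).2, by
        obtain ⟨hx1, hx2⟩ := x.2
        exact (hSmem _).mpr (hcomp _ _ _ hx2 hx1)⟩
      map_add' := fun x y => rfl
      map_smul' := fun c x => rfl }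
  have hf : Function.Injective f := by
    intro x y hxy
    have h2 : (x : H1 × H2).2 = (y : H1 × H2).2 := congrArg Subtype.val hxy
    have hd : ((x : H1 × H2) - (y : H1 × H2)) ∈ V2 := V2.sub_mem x.2.2 y.2.2
    have hd2 : ((x : H1 × H2) - (y : H1 × H2)).2 = 0 := by
      simp [h2]
    have h1 : ((x : H1 × H2) - (y : H1 × H2)).1 = 0 := by
      apply h2graph
      have : ((x : H1 × H2) - (y : H1 × H2)) =
          (((x : H1 × H2) - (y : H1 × H2)).1, (0 : H2)) := by
        ext <;> simp [hd2]
      rwa [this] at hd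
    apply Subtype.ext
    have : (x : H1 × H2) - (y : H1 × H2) = 0 := by
      ext <;> simp_all
    exact sub_eq_zero.mp this
  exact FiniteDimensional.of_injective f hf
end

section
/- Let H1, H2 be Hilbert spaces and A1: H1 → H2, A2: H2 → H1 bounded operators such that 1 is not in the essential spectrum of A1 ∘ A2. Then the graphs V1 = Graph(A1) and V2 = {(A2 h, h)} in H1 ⊕ H2 are quasi-complementary with excess equal to the Fredholm index of (1 − A1 A2). -/
open Module

/-- A bounded operator is *Fredholm* if its kernel is finite-dimensional and its range is
closed of finite codimension. -/
def IsFredholm {E F : Type*} [NormedAddCommGroup E] [NormedAddCommGroup F]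
    [NormedSpace ℂ E] [NormedSpace ℂ F] (T : E →L[ℂ] F) : Prop :=
  FiniteDimensional ℂ (LinearMap.ker (T : E →ₗ[ℂ] F)) ∧ IsClosed (LinearMap.range (T : E →ₗ[ℂ] F) : Set F) ∧
    FiniteDimensional ℂ (F ⧸ LinearMap.range (T : E →ₗ[ℂ] F))

/-- The Fredholm index: `dim ker T - codim range T`. -/
noncomputable def fredholmIndex {E F : Type*} [NormedAddCommGroup E] [NormedAddCommGroup F]
    [NormedSpace ℂ E] [NormedSpace ℂ F] (T : E →L[ℂ] F) : ℤ :=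
  (finrank ℂ (LinearMap.ker (T : E →ₗ[ℂ] F)) : ℤ) - finrank ℂ (F ⧸ LinearMap.range (T : E →ₗ[ℂ] F))

/-!
The map `(x, h) ↦ h - A1 x` kills `V1` and sends `V2` onto `range (1 - A1 A2)`; since it is
surjective, `V1 + V2` is exactly the preimage of `range (1 - A1 A2)`, hence closed with the same
codimension. The projection `(x, h) ↦ h` identifies `V1 ∩ V2` with `ker (1 - A1 A2)`, its
inverse being `h ↦ (A2 h, h)`.
-/

noncomputable def Submodule.quotComapEquivOfSurjective {R M N : Type*} [Ring R]
    [AddCommGroup M] [Module R M] [AddCommGroup N] [Module R N]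
    (f : M →ₗ[R] N) (hf : Function.Surjective f) (q : Submodule R N) :
    (M ⧸ q.comap f) ≃ₗ[R] N ⧸ q :=
  (Submodule.quotEquivOfEq _ _ (by rw [LinearMap.ker_comp, Submodule.ker_mkQ])).trans
    ((q.mkQ ∘ₗ f).quotKerEquivOfSurjective ((Submodule.mkQ_surjective q).comp hf))

section GraphPair

variable {R E F : Type*} [Ring R] [AddCommGroup E] [Module R E] [AddCommGroup F] [Module R F]
  {A1 : E →ₗ[R] F} {A2 : F →ₗ[R] E} {V1 V2 : Submodule R (E × F)}

theorem sup_eq_comap_range_id_sub_comp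
    (hV1 : ∀ p : E × F, p ∈ V1 ↔ p.2 = A1 p.1) (hV2 : ∀ p : E × F, p ∈ V2 ↔ p.1 = A2 p.2) :
    V1 ⊔ V2 = (LinearMap.range (LinearMap.id - A1 ∘ₗ A2)).comap
      (LinearMap.snd R E F - A1 ∘ₗ LinearMap.fst R E F) := by
  apply le_antisymm
  · refine sup_le (fun p hp => ⟨0, ?_⟩) (fun p hp => ⟨p.2, ?_⟩)
    · simp [(hV1 p).1 hp]
    · simp [(hV2 p).1 hp]
  · rintro ⟨x, y⟩ ⟨h, hh⟩
    replace hh : h - A1 (A2 h) = y - A1 x := hh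
    refine Submodule.mem_sup.2
      ⟨(x - A2 h, A1 (x - A2 h)), (hV1 _).2 rfl, (A2 h, h), (hV2 _).2 rfl, ?_⟩
    refine Prod.ext (sub_add_cancel x _) ?_
    simp only [Prod.snd_add, map_sub]
    linear_combination (norm := module) hh

def infEquivKerIdSubComp
    (hV1 : ∀ p : E × F, p ∈ V1 ↔ p.2 = A1 p.1) (hV2 : ∀ p : E × F, p ∈ V2 ↔ p.1 = A2 p.2) :
    ↥(V1 ⊓ V2) ≃ₗ[R] LinearMap.ker (LinearMap.id - A1 ∘ₗ A2) where
  toFun p := ⟨p.1.2, by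
    obtain ⟨h1, h2⟩ := Submodule.mem_inf.1 p.2
    simp [← (hV2 _).1 h2, ← (hV1 _).1 h1]⟩
  map_add' _ _ := rfl
  map_smul' _ _ := rfl
  invFun h := ⟨(A2 h, h), Submodule.mem_inf.2
    ⟨(hV1 _).2 (sub_eq_zero.1 (LinearMap.mem_ker.1 h.2)), (hV2 _).2 rfl⟩⟩
  left_inv p := Subtype.ext <| Prod.ext ((hV2 _).1 (Submodule.mem_inf.1 p.2).2).symm rfl
  right_inv _ := rfl

noncomputable def quotSupEquivQuotRangeIdSubComp
    (hV1 : ∀ p : E × F, p ∈ V1 ↔ p.2 = A1 p.1) (hV2 : ∀ p : E × F, p ∈ V2 ↔ p.1 = A2 p.2) :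
    ((E × F) ⧸ (V1 ⊔ V2)) ≃ₗ[R] F ⧸ LinearMap.range (LinearMap.id - A1 ∘ₗ A2) :=
  (Submodule.quotEquivOfEq _ _ (sup_eq_comap_range_id_sub_comp hV1 hV2)).trans
    (Submodule.quotComapEquivOfSurjective _ (fun y => ⟨(0, y), by simp⟩) _)

end GraphPair

theorem stmt4_general {H1 H2 : Type*}
    [NormedAddCommGroup H1] [InnerProductSpace ℂ H1]
    [NormedAddCommGroup H2] [InnerProductSpace ℂ H2]
    (A1 : H1 →L[ℂ] H2) (A2 : H2 →L[ℂ] H1)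
    (hfred : IsFredholm ((1 : H2 →L[ℂ] H2) - A1.comp A2))
    (V1 V2 : Submodule ℂ (H1 × H2))
    (hV1 : ∀ p : H1 × H2, p ∈ V1 ↔ p.2 = A1 p.1)
    (hV2 : ∀ p : H1 × H2, p ∈ V2 ↔ p.1 = A2 p.2) :
    FiniteDimensional ℂ ↥(V1 ⊓ V2) ∧
      IsClosed ((V1 ⊔ V2 : Submodule ℂ (H1 × H2)) : Set (H1 × H2)) ∧
      FiniteDimensional ℂ ((H1 × H2) ⧸ (V1 ⊔ V2)) ∧
      (finrank ℂ ↥(V1 ⊓ V2) : ℤ) - finrank ℂ ((H1 × H2) ⧸ (V1 ⊔ V2)) =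
        fredholmIndex ((1 : H2 →L[ℂ] H2) - A1.comp A2) := by
  have hT : ((1 - A1.comp A2 : H2 →L[ℂ] H2) : H2 →ₗ[ℂ] H2) =
      LinearMap.id - (A1 : H1 →ₗ[ℂ] H2) ∘ₗ A2 := rfl
  obtain ⟨hker, hclosed, hcoker⟩ := hfred
  rw [hT] at hker hclosed hcoker
  let eInf := infEquivKerIdSubComp (A1 := (A1 : H1 →ₗ[ℂ] H2)) (A2 := A2) hV1 hV2
  let eQuot := quotSupEquivQuotRangeIdSubComp (A1 := (A1 : H1 →ₗ[ℂ] H2)) (A2 := A2) hV1 hV2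
  have : FiniteDimensional ℂ ↥(V1 ⊓ V2) := Module.Finite.equiv eInf.symm
  have : FiniteDimensional ℂ ((H1 × H2) ⧸ (V1 ⊔ V2)) := Module.Finite.equiv eQuot.symm
  refine ⟨‹_›, ?_, ‹_›, ?_⟩
  · rw [sup_eq_comap_range_id_sub_comp (A1 := (A1 : H1 →ₗ[ℂ] H2)) (A2 := A2) hV1 hV2,
      Submodule.comap_coe]
    exact hclosed.preimage (show Continuous fun p : H1 × H2 => p.2 - A1 p.1 by fun_prop)
  · rw [fredholmIndex, hT, eInf.finrank_eq, eQuot.finrank_eq]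

/-- If `A1 : H1 → H2`, `A2 : H2 → H1` are bounded and `1` is not in the essential spectrum of
`A1 ∘ A2` (i.e. `1 - A1 A2` is Fredholm), then the graphs `V1 = {(x, A1 x)}` and
`V2 = {(A2 h, h)}` in `H1 ⊕ H2` are quasi-complementary with excess the Fredholm index of
`1 - A1 A2`. -/
theorem stmt4 {H1 H2 : Type*}
    [NormedAddCommGroup H1] [InnerProductSpace ℂ H1] [CompleteSpace H1]
    [NormedAddCommGroup H2] [InnerProductSpace ℂ H2] [CompleteSpace H2]
    (A1 : H1 →L[ℂ] H2) (A2 : H2 →L[ℂ] H1)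
    (hfred : IsFredholm ((1 : H2 →L[ℂ] H2) - A1.comp A2))
    (V1 V2 : Submodule ℂ (H1 × H2))
    (hV1 : ∀ p : H1 × H2, p ∈ V1 ↔ p.2 = A1 p.1)
    (hV2 : ∀ p : H1 × H2, p ∈ V2 ↔ p.1 = A2 p.2) :
    FiniteDimensional ℂ ↥(V1 ⊓ V2) ∧
      IsClosed ((V1 ⊔ V2 : Submodule ℂ (H1 × H2)) : Set (H1 × H2)) ∧
      FiniteDimensional ℂ ((H1 × H2) ⧸ (V1 ⊔ V2)) ∧
      (finrank ℂ ↥(V1 ⊓ V2) : ℤ) - finrank ℂ ((H1 × H2) ⧸ (V1 ⊔ V2)) =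
        fredholmIndex ((1 : H2 →L[ℂ] H2) - A1.comp A2) :=
  stmt4_general A1 A2 hfred V1 V2 hV1 hV2
end

section
/- Let A: H1 → H2 be a non-compact bounded operator between Hilbert spaces. Then there exists a bounded operator B: H2 → H1 such that 1 lies in the essential spectrum of A ∘ B. -/
open scoped InnerProductSpace

section

variable {𝕜 E F : Type*} [RCLike 𝕜] [NormedAddCommGroup E] [InnerProductSpace 𝕜 E]
  [NormedAddCommGroup F]

theorem isCompactOperator_of_forall_exists_finiteDimensional_orthogonal_norm_le
    [NormedSpace 𝕜 F] [CompleteSpace F] (A : E →L[𝕜] F)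
    (h : ∀ ε > 0, ∃ V : Submodule 𝕜 E, FiniteDimensional 𝕜 V ∧ ∀ x ∈ Vᗮ, ‖A x‖ ≤ ε * ‖x‖) :
    IsCompactOperator A := by
  refine isClosed_setOfPred_isCompactOperator.closure_subset
    (Metric.mem_closure_iff.2 fun ε hε => ?_)
  obtain ⟨V, hV, hAV⟩ := h (ε / 2) (half_pos hε)
  refine ⟨A ∘L V.starProjection, ?_, ?_⟩
  · exact (isCompactOperator_of_locallyCompactSpace_dom V.orthogonalProjectionOnto).clm_comp
      (A ∘L V.subtypeL)
  · have hbound : ‖A - A ∘L V.starProjection‖ ≤ ε / 2 := by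
      refine ContinuousLinearMap.opNorm_le_bound _ (half_pos hε).le fun x => ?_
      have hx : (A - A ∘L V.starProjection) x = A (Vᗮ.starProjection x) := by
        simp [map_sub]
      calc ‖(A - A ∘L V.starProjection) x‖ ≤ ε / 2 * ‖Vᗮ.starProjection x‖ := by
            rw [hx]; exact hAV _ (Vᗮ.starProjection_apply_mem x)
        _ ≤ ε / 2 * ‖x‖ := by gcongr; exact Vᗮ.norm_starProjection_apply_le x
    rw [dist_eq_norm]
    linarith

theorem exists_pos_forall_exists_mem_orthogonal_of_not_isCompactOperator [NormedSpace 𝕜 F]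
    [CompleteSpace F] {A : E →L[𝕜] F} (hA : ¬IsCompactOperator A) :
    ∃ ε > 0, ∀ V : Submodule 𝕜 E, FiniteDimensional 𝕜 V →
      ∃ x ∈ Vᗮ, ‖x‖ = 1 ∧ ε < ‖A x‖ := by
  contrapose! hA
  refine isCompactOperator_of_forall_exists_finiteDimensional_orthogonal_norm_le A fun ε hε => ?_
  obtain ⟨V, hV, hAV⟩ := hA ε hε
  refine ⟨V, hV, fun x hx => ?_⟩
  rcases eq_or_ne x 0 with rfl | hx0
  · simp
  have hunit := hAV _ (Vᗮ.smul_mem (‖x‖⁻¹ : 𝕜) hx) (norm_smul_inv_norm hx0)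
  rw [map_smul, norm_smul, norm_inv, RCLike.norm_ofReal, abs_norm,
    inv_mul_le_iff₀ (norm_pos_iff.2 hx0), mul_comm] at hunit
  exact hunit

theorem exists_seq_forall_lt_inner_eq_zero (T : E → E) {P : E → Prop}
    (h : ∀ V : Submodule 𝕜 E, FiniteDimensional 𝕜 V → ∃ x ∈ Vᗮ, P x) :
    ∃ e : ℕ → E, (∀ n, P (e n)) ∧
      ∀ k n, k < n → ⟪e k, e n⟫_𝕜 = 0 ∧ ⟪T (e k), e n⟫_𝕜 = 0 := by
  classical
  choose x hxV hxP using fun s : Finset E => h (Submodule.span 𝕜 s) inferInstance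
  let step : Finset E → Finset E := fun t => insert (x t) (insert (T (x t)) t)
  let s : ℕ → Finset E := fun n => step^[n] ∅
  have hs : ∀ n, s (n + 1) = step (s n) := fun n => Function.iterate_succ_apply' step n ∅
  have hmono : Monotone s := monotone_nat_of_le_succ fun n => by
    rw [hs]
    exact (Finset.subset_insert _ _).trans (Finset.subset_insert _ _)
  refine ⟨fun n => x (s n), fun n => hxP _, fun k n hkn => ?_⟩
  have hperp : ∀ y ∈ s (k + 1), ⟪y, x (s n)⟫_𝕜 = 0 := fun y hy =>
    Submodule.inner_right_of_mem_orthogonal (Submodule.subset_span (hmono hkn hy)) (hxV _)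
  exact ⟨hperp _ (by simp [hs, step]), hperp _ (by simp [hs, step])⟩

theorem exists_orthonormal_pairwise_inner_apply_eq_zero_of_not_isCompactOperator
    [InnerProductSpace 𝕜 F] [CompleteSpace E] [CompleteSpace F] {A : E →L[𝕜] F}
    (hA : ¬IsCompactOperator A) :
    ∃ ε > 0, ∃ e : ℕ → E, Orthonormal 𝕜 e ∧ (∀ n, ε < ‖A (e n)‖) ∧
      Pairwise fun m n => ⟪A (e m), A (e n)⟫_𝕜 = 0 := by
  obtain ⟨ε, hε, h⟩ := exists_pos_forall_exists_mem_orthogonal_of_not_isCompactOperator hA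
  obtain ⟨e, he, hperp⟩ :=
    exists_seq_forall_lt_inner_eq_zero (ContinuousLinearMap.adjoint A ∘L A) (P := fun x =>
      ‖x‖ = 1 ∧ ε < ‖A x‖) h
  have hpair : ∀ {r : E → E → Prop}, (∀ x y, r x y → r y x) →
      (∀ k n, k < n → r (e k) (e n)) → Pairwise fun m n => r (e m) (e n) :=
    fun hsymm hlt m n hmn => hmn.lt_or_gt.elim (hlt m n) fun hnm => hsymm _ _ (hlt n m hnm)
  refine ⟨ε, hε, e, ⟨fun n => (he n).1, ?_⟩, fun n => (he n).2, ?_⟩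
  · exact hpair (r := fun x y => ⟪x, y⟫_𝕜 = 0) (fun _ _ => inner_eq_zero_symm.1)
      fun k n hkn => (hperp k n hkn).1
  · refine hpair (r := fun x y => ⟪A x, A y⟫_𝕜 = 0) (fun _ _ => inner_eq_zero_symm.1)
      fun k n hkn => ?_
    simpa [ContinuousLinearMap.adjoint_inner_left] using (hperp k n hkn).2

section Orthonormal
variable [InnerProductSpace 𝕜 F] {ι : Type*}

theorem Orthonormal.norm_tsum_smul_sq_le {e : ι → F} (he : Orthonormal 𝕜 e) {a : ι → 𝕜} {M : ℝ}
    (h : ∀ s : Finset ι, ∑ i ∈ s, ‖a i‖ ^ 2 ≤ M) : ‖∑' i, a i • e i‖ ^ 2 ≤ M := by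
  by_cases hsum : Summable fun i => a i • e i
  · refine le_of_tendsto' ((hsum.hasSum.norm).pow 2) fun s => ?_
    have := he.orthogonalFamily.norm_sum a s
    simp only [LinearIsometry.toSpanSingleton_apply] at this
    exact this ▸ h s
  · simpa [tsum_eq_zero_of_not_summable hsum] using h ∅

theorem Orthonormal.exists_continuousLinearMap_apply_eq_smul [CompleteSpace F] {g : ι → E}
    {e : ι → F} (hg : Orthonormal 𝕜 g) (he : Orthonormal 𝕜 e) {c : ι → 𝕜} {C : ℝ}
    (hc : ∀ i, ‖c i‖ ≤ C) : ∃ B : E →L[𝕜] F, ∀ i, B (g i) = c i • e i := by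
  have hcoeff : ∀ f i, ‖c i * ⟪g i, f⟫_𝕜‖ ^ 2 ≤ C ^ 2 * ‖⟪g i, f⟫_𝕜‖ ^ 2 := fun f i => by
    rw [norm_mul, mul_pow]
    gcongr
    exact hc i
  have hsum : ∀ f, Summable fun i => (c i * ⟪g i, f⟫_𝕜) • e i := fun f => by
    have := (he.orthogonalFamily.summable_iff_norm_sq_summable _).2
      (((hg.inner_products_summable f).mul_left (C ^ 2)).of_nonneg_of_le (fun _ => by positivity)
        (hcoeff f))
    simpa only [LinearIsometry.toSpanSingleton_apply] using this
  let B : E →ₗ[𝕜] F :=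
    { toFun := fun f => ∑' i, (c i * ⟪g i, f⟫_𝕜) • e i
      map_add' := fun f f' => by
        simp only [inner_add_right, mul_add, add_smul]
        exact (hsum f).tsum_add (hsum f')
      map_smul' := fun r f => by
        simp only [inner_smul_right, RingHom.id_apply, ← (hsum f).tsum_const_smul r, smul_smul]
        exact tsum_congr fun i => by rw [mul_left_comm] }
  have hB : ∀ f, ‖B f‖ ≤ |C| * ‖f‖ := fun f => by
    refine (pow_le_pow_iff_left₀ (norm_nonneg _) (by positivity) two_ne_zero).1 ?_
    refine he.norm_tsum_smul_sq_le fun s => ?_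
    calc ∑ i ∈ s, ‖c i * ⟪g i, f⟫_𝕜‖ ^ 2 ≤ C ^ 2 * ∑ i ∈ s, ‖⟪g i, f⟫_𝕜‖ ^ 2 := by
          rw [Finset.mul_sum]; exact Finset.sum_le_sum fun i _ => hcoeff f i
      _ ≤ C ^ 2 * ‖f‖ ^ 2 := by gcongr; exact hg.sum_inner_products_le f
      _ = (|C| * ‖f‖) ^ 2 := by rw [mul_pow, sq_abs]
  refine ⟨B.mkContinuous |C| hB, fun i => ?_⟩
  change ∑' j, (c j * ⟪g j, g i⟫_𝕜) • e j = c i • e i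
  rw [tsum_eq_single i fun j hj => by simp [hg.inner_eq_zero hj]]
  simp [hg.norm_eq_one]
end Orthonormal

theorem orthonormal_inv_norm_smul {ι : Type*} {v : ι → E} (hv0 : ∀ i, v i ≠ 0)
    (hv : Pairwise fun i j => ⟪v i, v j⟫_𝕜 = 0) :
    Orthonormal 𝕜 fun i => (‖v i‖⁻¹ : 𝕜) • v i :=
  ⟨fun i => norm_smul_inv_norm (hv0 i), fun i j hij => by
    simp only [inner_smul_left, inner_smul_right, hv hij, mul_zero]⟩

theorem not_isFredholm_of_linearIndependent {E F ι : Type*} [NormedAddCommGroup E]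
    [NormedAddCommGroup F] [NormedSpace ℂ E] [NormedSpace ℂ F] [Infinite ι] (T : E →L[ℂ] F)
    {v : ι → E} (hv : LinearIndependent ℂ v) (hTv : ∀ i, T (v i) = 0) : ¬IsFredholm T := by
  rintro ⟨hker, -, -⟩
  have hv_ker : LinearIndependent ℂ fun i => (⟨v i, hTv i⟩ : LinearMap.ker (T : E →ₗ[ℂ] F)) :=
    LinearIndependent.of_comp (LinearMap.ker _).subtype hv
  exact Module.Finite.not_linearIndependent_of_infinite _ hv_ker

end

/-- For a non-compact bounded operator `A : H1 → H2` between Hilbert spaces there is a bounded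
operator `B : H2 → H1` such that `1` lies in the essential spectrum of `A ∘ B`, i.e.
`1 - A ∘ B` is not Fredholm. -/
theorem stmt6 {H1 H2 : Type*}
    [NormedAddCommGroup H1] [InnerProductSpace ℂ H1] [CompleteSpace H1]
    [NormedAddCommGroup H2] [InnerProductSpace ℂ H2] [CompleteSpace H2]
    (A : H1 →L[ℂ] H2) (hA : ¬ IsCompactOperator ⇑A) :
    ∃ B : H2 →L[ℂ] H1, ¬ IsFredholm ((1 : H2 →L[ℂ] H2) - A.comp B) := by
  obtain ⟨ε, hε, e, he, hAe, hperp⟩ :=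
    exists_orthonormal_pairwise_inner_apply_eq_zero_of_not_isCompactOperator hA
  have hg := orthonormal_inv_norm_smul (fun n => norm_pos_iff.1 (hε.trans (hAe n))) hperp
  obtain ⟨B, hB⟩ := hg.exists_continuousLinearMap_apply_eq_smul he
    (c := fun n => (‖A (e n)‖⁻¹ : ℂ)) (C := ε⁻¹) fun n => by
      simpa using inv_anti₀ hε (hAe n).le
  refine ⟨B, not_isFredholm_of_linearIndependent _ hg.linearIndependent fun n => ?_⟩
  rw [sub_apply, one_apply_eq_self, ContinuousLinearMap.comp_apply, hB, map_smul]
  exact sub_self _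
end

section
/- Let H be a Hilbert space and (H_i)_{i∈I} a family of closed subspaces with orthogonal complements H_i^⊥. The following are equivalent: (1) the product of quotient projections H → ∏_i H/H_i has image contained in the Hilbert direct sum ⊕_{l2,i} H/H_i and is bounded; (2) the natural summation map ⊕_i H_i^⊥ → H extends to a bounded operator ⊕_{l2,i} H_i^⊥ → H; (3) the block-Gram matrix P with blocks P_{ij} equal to the orthogonal projection H_j^⊥ → H_i^⊥ defines a bounded operator on ⊕_{l2,i} H_i^⊥. -/
/-!
We prove this for an arbitrary family of operators `f i : E i →L[𝕜] H`; the statement is the case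
of the inclusions of `(Hs i)ᗮ`, whose adjoints are the orthogonal projections.

The analysis operator `h ↦ ((f i)† h)_i` and the synthesis operator `(v_i) ↦ ∑ f i (v_i)` are
adjoint to each other, and the block-Gram matrix is `S† ∘ S`. Conversely, if the Gram matrix `P`
is bounded then `‖∑_{i ∈ s} f i (v_i)‖² = ⟪P v, v⟫ ≤ ‖P‖ ∑_{i ∈ s} ‖v_i‖²` for finitely supported
`v`, so `∑ f i (v_i)` is Cauchy for every `v ∈ ℓ²` and defines a bounded synthesis operator.
-/

open scoped InnerProductSpace InnerProduct

section Synthesis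

variable {𝕜 H ι : Type*} {E : ι → Type*} [RCLike 𝕜]
  [NormedAddCommGroup H] [InnerProductSpace 𝕜 H] [CompleteSpace H]
  [∀ i, NormedAddCommGroup (E i)] [∀ i, InnerProductSpace 𝕜 (E i)] [∀ i, CompleteSpace (E i)]
  [DecidableEq ι] {f : ∀ i, E i →L[𝕜] H}

theorem adjoint_apply_eq_of_map_single {S : lp E 2 →L[𝕜] H}
    (hS : ∀ i v, S (lp.single 2 i v) = f i v) (h : H) (i : ι) : (S†) h i = (f i†) h :=
  ext_inner_left 𝕜 fun v => by
    rw [← lp.inner_single_left, ContinuousLinearMap.adjoint_inner_right, hS,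
      ContinuousLinearMap.adjoint_inner_right]

theorem adjoint_map_single_of_apply_eq {T : H →L[𝕜] lp E 2}
    (hT : ∀ h i, T h i = (f i†) h) (i : ι) (v : E i) : (T†) (lp.single 2 i v) = f i v :=
  ext_inner_right 𝕜 fun h => by
    rw [ContinuousLinearMap.adjoint_inner_left, lp.inner_single_left, hT,
      ContinuousLinearMap.adjoint_inner_right]

section Gram

variable {P : lp E 2 →L[𝕜] lp E 2} (hP : ∀ j v i, P (lp.single 2 j v) i = (f i†) (f j v))
include hP

theorem inner_apply_single_single_of_gram (i j : ι) (a : E i) (b : E j) :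
    ⟪P (lp.single 2 j b), lp.single 2 i a⟫_𝕜 = ⟪f j b, f i a⟫_𝕜 := by
  rw [← inner_conj_symm, lp.inner_single_left, hP, ContinuousLinearMap.adjoint_inner_right,
    inner_conj_symm]

theorem norm_sum_sq_le_of_gram (v : ∀ i, E i) (s : Finset ι) :
    ‖∑ i ∈ s, f i (v i)‖ ^ 2 ≤ ‖P‖ * ∑ i ∈ s, ‖v i‖ ^ 2 := by
  set y := ∑ i ∈ s, lp.single 2 i (v i)
  have hy : ‖y‖ ^ 2 = ∑ i ∈ s, ‖v i‖ ^ 2 := by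
    simpa [Real.rpow_two] using lp.norm_sum_single (p := 2) (by norm_num) v s
  have hPy : ⟪P y, y⟫_𝕜 = ⟪∑ i ∈ s, f i (v i), ∑ i ∈ s, f i (v i)⟫_𝕜 := by
    simp only [y, map_sum, sum_inner, inner_sum, inner_apply_single_single_of_gram hP]
  calc ‖∑ i ∈ s, f i (v i)‖ ^ 2 = RCLike.re ⟪P y, y⟫_𝕜 := by rw [hPy, inner_self_eq_norm_sq]
    _ ≤ ‖P y‖ * ‖y‖ := (RCLike.re_le_norm _).trans (norm_inner_le_norm _ _)
    _ ≤ ‖P‖ * ‖y‖ * ‖y‖ := by gcongr; exact P.le_opNorm y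
    _ = ‖P‖ * ∑ i ∈ s, ‖v i‖ ^ 2 := by rw [← hy]; ring

theorem summable_of_gram (x : lp E 2) : Summable fun i => f i (x i) := by
  have hx : Summable fun i => ‖x i‖ ^ 2 := by
    simpa [Real.rpow_two] using (lp.memℓp x).summable (by norm_num)
  refine summable_iff_vanishing_norm.2 fun ε hε => ?_
  obtain ⟨s, hs⟩ := summable_iff_vanishing_norm.1 hx (ε ^ 2 / (‖P‖ + 1)) (by positivity)
  refine ⟨s, fun t ht => ?_⟩
  have htail := hs t ht
  rw [Real.norm_of_nonneg (by positivity), lt_div_iff₀ (by positivity)] at htail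
  have hsum := norm_sum_sq_le_of_gram hP x t
  have hsq : ‖∑ i ∈ t, f i (x i)‖ ^ 2 < ε ^ 2 := by
    nlinarith [norm_nonneg P, Finset.sum_nonneg fun i (_ : i ∈ t) => sq_nonneg ‖x i‖]
  exact lt_of_pow_lt_pow_left₀ 2 hε.le hsq

theorem norm_tsum_le_of_gram (x : lp E 2) : ‖∑' i, f i (x i)‖ ≤ √‖P‖ * ‖x‖ := by
  refine le_of_tendsto' (summable_of_gram hP x).hasSum.norm fun s => ?_
  rw [← pow_le_pow_iff_left₀ (norm_nonneg _) (by positivity) two_ne_zero, mul_pow,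
    Real.sq_sqrt (norm_nonneg _)]
  refine (norm_sum_sq_le_of_gram hP x s).trans (mul_le_mul_of_nonneg_left ?_ (norm_nonneg _))
  simpa [Real.rpow_two] using lp.sum_rpow_le_norm_rpow (p := 2) (by norm_num) x s

theorem exists_map_single_of_gram :
    ∃ S : lp E 2 →L[𝕜] H, ∀ i v, S (lp.single 2 i v) = f i v := by
  have hsum := summable_of_gram hP
  let S : lp E 2 →ₗ[𝕜] H :=
    { toFun x := ∑' i, f i (x i)
      map_add' x y := by
        simp only [lp.coeFn_add, Pi.add_apply, map_add]
        exact (hsum x).tsum_add (hsum y)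
      map_smul' c x := by
        simp only [lp.coeFn_smul, Pi.smul_apply, map_smul, RingHom.id_apply]
        exact (hsum x).tsum_const_smul c }
  refine ⟨S.mkContinuous √‖P‖ (norm_tsum_le_of_gram hP), fun i v => ?_⟩
  show ∑' j, f j (lp.single 2 i v j) = f i v
  rw [tsum_eq_single i fun j hj => by rw [lp.single_apply_ne 2 i v hj, map_zero],
    lp.single_apply_self]

end Gram

theorem exists_apply_eq_adjoint_iff_exists_map_single :
    (∃ T : H →L[𝕜] lp E 2, ∀ h i, T h i = (f i†) h) ↔
      ∃ S : lp E 2 →L[𝕜] H, ∀ i v, S (lp.single 2 i v) = f i v :=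
  ⟨fun ⟨T, hT⟩ => ⟨T†, adjoint_map_single_of_apply_eq hT⟩,
    fun ⟨S, hS⟩ => ⟨S†, adjoint_apply_eq_of_map_single hS⟩⟩

theorem exists_map_single_iff_exists_gram :
    (∃ S : lp E 2 →L[𝕜] H, ∀ i v, S (lp.single 2 i v) = f i v) ↔
      ∃ P : lp E 2 →L[𝕜] lp E 2, ∀ j v i, P (lp.single 2 j v) i = (f i†) (f j v) :=
  ⟨fun ⟨S, hS⟩ => ⟨S† ∘L S, fun j v i => by
      rw [ContinuousLinearMap.comp_apply, hS, adjoint_apply_eq_of_map_single hS]⟩,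
    fun ⟨_, hP⟩ => exists_map_single_of_gram hP⟩

end Synthesis

theorem stmt10_general {H : Type*} [NormedAddCommGroup H] [InnerProductSpace ℂ H] [CompleteSpace H]
    {ι : Type*} [DecidableEq ι] (Hs : ι → Submodule ℂ H) :
    ((∃ T : H →L[ℂ] lp (fun i => ↥(Hs i)ᗮ) 2,
        ∀ (h : H) (i : ι), T h i = Submodule.orthogonalProjectionOnto (Hs i)ᗮ h) ↔
      (∃ S : lp (fun i => ↥(Hs i)ᗮ) 2 →L[ℂ] H,
        ∀ (i : ι) (v : ↥(Hs i)ᗮ), S (lp.single 2 i v) = (v : H))) ∧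
    ((∃ S : lp (fun i => ↥(Hs i)ᗮ) 2 →L[ℂ] H,
        ∀ (i : ι) (v : ↥(Hs i)ᗮ), S (lp.single 2 i v) = (v : H)) ↔
      (∃ P : lp (fun i => ↥(Hs i)ᗮ) 2 →L[ℂ] lp (fun i => ↥(Hs i)ᗮ) 2,
        ∀ (j : ι) (v : ↥(Hs j)ᗮ) (i : ι),
          P (lp.single 2 j v) i = Submodule.orthogonalProjectionOnto (Hs i)ᗮ (v : H))) := by
  simp_rw [← Submodule.adjoint_subtypeL]
  exact ⟨exists_apply_eq_adjoint_iff_exists_map_single,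
    exists_map_single_iff_exists_gram (f := fun i => (Hs i)ᗮ.subtypeL)⟩

/-- For a family of closed subspaces `Hs i` of a Hilbert space `H` (identifying `H / Hs i`
with the orthogonal complement `(Hs i)ᗮ`), the following are equivalent:
(1) the product of the quotient projections maps `H` boundedly into the Hilbert direct sum
`⊕_{ℓ²} (Hs i)ᗮ`; (2) the summation map `⊕ (Hs i)ᗮ → H` extends to a bounded operator on the
Hilbert direct sum; (3) the block-Gram matrix of orthogonal projections
`(Hs j)ᗮ → (Hs i)ᗮ` defines a bounded operator on the Hilbert direct sum. -/
theorem stmt10 {H : Type*} [NormedAddCommGroup H] [InnerProductSpace ℂ H] [CompleteSpace H]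
    {ι : Type*} [DecidableEq ι] (Hs : ι → Submodule ℂ H) [∀ i, CompleteSpace (Hs i)] :
    ((∃ T : H →L[ℂ] lp (fun i => ↥(Hs i)ᗮ) 2,
        ∀ (h : H) (i : ι), T h i = Submodule.orthogonalProjectionOnto (Hs i)ᗮ h) ↔
      (∃ S : lp (fun i => ↥(Hs i)ᗮ) 2 →L[ℂ] H,
        ∀ (i : ι) (v : ↥(Hs i)ᗮ), S (lp.single 2 i v) = (v : H))) ∧
    ((∃ S : lp (fun i => ↥(Hs i)ᗮ) 2 →L[ℂ] H,
        ∀ (i : ι) (v : ↥(Hs i)ᗮ), S (lp.single 2 i v) = (v : H)) ↔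
      (∃ P : lp (fun i => ↥(Hs i)ᗮ) 2 →L[ℂ] lp (fun i => ↥(Hs i)ᗮ) 2,
        ∀ (j : ι) (v : ↥(Hs j)ᗮ) (i : ι),
          P (lp.single 2 j v) i = Submodule.orthogonalProjectionOnto (Hs i)ᗮ (v : H))) :=
  stmt10_general Hs
end

section
/- Let H be a Hilbert space and (H_i^⊥) a family of closed subspaces whose block-Gram matrix P (with blocks the orthogonal projections H_j^⊥ → H_i^⊥) defines a bounded, non-negative self-adjoint operator on ⊕_{l2,i} H_i^⊥. Then the summation map ι: ⊕_i H_i^⊥ → H satisfies ι* ι = P, and ι extends continuously to ⊕_{l2,i} H_i^⊥ with ‖ι‖² = ‖P‖. -/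
/-!
On finitely supported families the block-Gram condition gives
`⟪P x, y⟫ = ⟪∑ i, x i, ∑ j, y j⟫`, hence `‖∑ i ∈ s, x i‖² ≤ ‖P‖ ∑ i ∈ s, ‖x i‖²`.
This Cauchy estimate makes `∑ i, x i` converge for every `x ∈ ℓ²`, the identity passes to the
limit, i.e. `ι† ι = P`, and the C⋆-identity `‖ι† ι‖ = ‖ι‖²` gives `‖ι‖² = ‖P‖`.
-/

open scoped InnerProductSpace

theorem summable_of_norm_sum_sq_le {ι E : Type*} [NormedAddCommGroup E] [CompleteSpace E]
    {v : ι → E} (C : ℝ) (hv : Summable fun i => ‖v i‖ ^ 2)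
    (h : ∀ s : Finset ι, ‖∑ i ∈ s, v i‖ ^ 2 ≤ C * ∑ i ∈ s, ‖v i‖ ^ 2) : Summable v := by
  refine summable_iff_vanishing_norm.2 fun ε hε => ?_
  obtain ⟨s, hs⟩ := summable_iff_vanishing_norm.1 hv (ε ^ 2 / (|C| + 1)) (by positivity)
  refine ⟨s, fun t ht => lt_of_pow_lt_pow_left₀ 2 hε.le ?_⟩
  have htail : ∑ i ∈ t, ‖v i‖ ^ 2 < ε ^ 2 / (|C| + 1) :=
    (le_abs_self _).trans_lt (Real.norm_eq_abs _ ▸ hs t ht)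
  calc ‖∑ i ∈ t, v i‖ ^ 2 ≤ C * ∑ i ∈ t, ‖v i‖ ^ 2 := h t
    _ ≤ (|C| + 1) * ∑ i ∈ t, ‖v i‖ ^ 2 := by
      gcongr
      linarith [le_abs_self C]
    _ < (|C| + 1) * (ε ^ 2 / (|C| + 1)) := by gcongr
    _ = ε ^ 2 := by field_simp

theorem ContinuousLinearMap.re_inner_self_apply_le {𝕜 E : Type*} [RCLike 𝕜] [NormedAddCommGroup E]
    [InnerProductSpace 𝕜 E] (T : E →L[𝕜] E) (x : E) :
    RCLike.re ⟪T x, x⟫_𝕜 ≤ ‖T‖ * ‖x‖ ^ 2 :=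
  calc RCLike.re ⟪T x, x⟫_𝕜 ≤ ‖T x‖ * ‖x‖ := re_inner_le_norm _ _
    _ ≤ ‖T‖ * ‖x‖ * ‖x‖ := by gcongr; exact T.le_opNorm x
    _ = ‖T‖ * ‖x‖ ^ 2 := by ring

section

variable {𝕜 H ι : Type*} [RCLike 𝕜] [NormedAddCommGroup H] [InnerProductSpace 𝕜 H]
  [DecidableEq ι]

def IsBlockGram (K : ι → Submodule 𝕜 H) [∀ i, (K i).HasOrthogonalProjection]
    (P : lp (fun i => K i) 2 →L[𝕜] lp (fun i => K i) 2) : Prop :=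
  ∀ (j : ι) (v : K j) (i : ι), P (lp.single 2 j v) i = (K i).orthogonalProjectionOnto (v : H)

namespace IsBlockGram

variable {K : ι → Submodule 𝕜 H} [∀ i, CompleteSpace (K i)]
  {P : lp (fun i => K i) 2 →L[𝕜] lp (fun i => K i) 2}

theorem inner_single_single (hP : IsBlockGram K P) (i : ι) (v : K i) (j : ι) (w : K j) :
    ⟪P (lp.single 2 i v), lp.single 2 j w⟫_𝕜 = ⟪(v : H), (w : H)⟫_𝕜 := by
  rw [lp.inner_single_right, Submodule.coe_inner, hP, ← Submodule.coe_inner,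
    Submodule.inner_orthogonalProjectionOnto_eq_of_mem_right]

theorem inner_sum_single (hP : IsBlockGram K P) (s : Finset ι) (x y : ∀ i, K i) :
    ⟪P (∑ i ∈ s, lp.single 2 i (x i)), ∑ j ∈ s, lp.single 2 j (y j)⟫_𝕜 =
      ⟪∑ i ∈ s, (x i : H), ∑ j ∈ s, (y j : H)⟫_𝕜 := by
  simp only [map_sum, sum_inner, inner_sum, hP.inner_single_single]

theorem norm_sum_sq_le (hP : IsBlockGram K P) (s : Finset ι) (x : ∀ i, K i) :
    ‖∑ i ∈ s, (x i : H)‖ ^ 2 ≤ ‖P‖ * ∑ i ∈ s, ‖x i‖ ^ 2 := by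
  have hnorm := lp.norm_sum_single (E := fun i => K i) (p := 2) (by norm_num) x s
  simp only [ENNReal.toReal_ofNat, Real.rpow_two] at hnorm
  rw [← hnorm, ← inner_self_eq_norm_sq (𝕜 := 𝕜), ← hP.inner_sum_single]
  exact P.re_inner_self_apply_le _

variable [CompleteSpace H]

theorem summable (hP : IsBlockGram K P) (x : lp (fun i => K i) 2) :
    Summable fun i => (x i : H) := by
  have hx : Summable fun i => ‖x i‖ ^ 2 := by
    simpa only [ENNReal.toReal_ofNat, Real.rpow_two] using (lp.memℓp x).summable (by norm_num)
  refine summable_of_norm_sum_sq_le ‖P‖ (by simpa only [Submodule.norm_coe] using hx) ?_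
  exact fun s => by simpa only [Submodule.norm_coe] using hP.norm_sum_sq_le s x

noncomputable def summationₗ (hP : IsBlockGram K P) : lp (fun i => K i) 2 →ₗ[𝕜] H where
  toFun x := ∑' i, (x i : H)
  map_add' x y := by
    simp only [lp.coeFn_add, Pi.add_apply, Submodule.coe_add]
    exact (hP.summable x).tsum_add (hP.summable y)
  map_smul' c x := by
    simp only [lp.coeFn_smul, Pi.smul_apply, Submodule.coe_smul, RingHom.id_apply]
    exact (hP.summable x).tsum_const_smul c

theorem hasSum_summationₗ (hP : IsBlockGram K P) (x : lp (fun i => K i) 2) :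
    HasSum (fun i => (x i : H)) (hP.summationₗ x) :=
  (hP.summable x).hasSum

theorem inner_apply_eq_inner_summationₗ (hP : IsBlockGram K P) (x y : lp (fun i => K i) 2) :
    ⟪P x, y⟫_𝕜 = ⟪hP.summationₗ x, hP.summationₗ y⟫_𝕜 := by
  have hx := lp.hasSum_single (p := 2) ENNReal.ofNat_ne_top x
  have hy := lp.hasSum_single (p := 2) ENNReal.ofNat_ne_top y
  refine tendsto_nhds_unique ?_ ((hP.hasSum_summationₗ x).inner (hP.hasSum_summationₗ y))
  exact (((P.continuous.tendsto x).comp hx).inner hy).congr fun s => hP.inner_sum_single s x y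

theorem norm_summationₗ_le (hP : IsBlockGram K P) (x : lp (fun i => K i) 2) :
    ‖hP.summationₗ x‖ ≤ √‖P‖ * ‖x‖ := by
  refine le_of_pow_le_pow_left₀ two_ne_zero (by positivity) ?_
  rw [mul_pow, Real.sq_sqrt (norm_nonneg P), ← inner_self_eq_norm_sq (𝕜 := 𝕜),
    ← hP.inner_apply_eq_inner_summationₗ]
  exact P.re_inner_self_apply_le x

noncomputable def summation (hP : IsBlockGram K P) : lp (fun i => K i) 2 →L[𝕜] H :=
  hP.summationₗ.mkContinuous √‖P‖ hP.norm_summationₗ_le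

theorem summation_single (hP : IsBlockGram K P) (i : ι) (v : K i) :
    hP.summation (lp.single 2 i v) = v := by
  have hsingle := hasSum_single (f := fun j => ((lp.single 2 i v : lp (fun i => K i) 2) j : H)) i
    fun j hj => by simp [hj]
  simp only [lp.single_apply_self] at hsingle
  exact (hP.hasSum_summationₗ _).unique hsingle

theorem adjoint_summation_comp_summation (hP : IsBlockGram K P) :
    (ContinuousLinearMap.adjoint hP.summation).comp hP.summation = P :=
  ContinuousLinearMap.ext fun x => ext_inner_right 𝕜 fun y => by
    rw [ContinuousLinearMap.comp_apply, ContinuousLinearMap.adjoint_inner_left,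
      hP.inner_apply_eq_inner_summationₗ]
    rfl

theorem norm_summation_sq (hP : IsBlockGram K P) : ‖hP.summation‖ ^ 2 = ‖P‖ := by
  rw [sq, ← ContinuousLinearMap.norm_adjoint_comp_self, hP.adjoint_summation_comp_summation]

end IsBlockGram

end

theorem stmt11_general {H : Type*} [NormedAddCommGroup H] [InnerProductSpace ℂ H] [CompleteSpace H]
    {ι : Type*} [DecidableEq ι] (Hs : ι → Submodule ℂ H)
    (P : lp (fun i => ↥(Hs i)ᗮ) 2 →L[ℂ] lp (fun i => ↥(Hs i)ᗮ) 2)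
    (hP : ∀ (j : ι) (v : ↥(Hs j)ᗮ) (i : ι),
      P (lp.single 2 j v) i = Submodule.orthogonalProjection (Hs i)ᗮ (v : H)) :
    ∃ ι₀ : lp (fun i => ↥(Hs i)ᗮ) 2 →L[ℂ] H,
      (∀ (i : ι) (v : ↥(Hs i)ᗮ), ι₀ (lp.single 2 i v) = (v : H)) ∧
      (ContinuousLinearMap.adjoint ι₀).comp ι₀ = P ∧
      ‖ι₀‖ ^ 2 = ‖P‖ := by
  have hGram : IsBlockGram (fun i => (Hs i)ᗮ) P := hP
  exact ⟨hGram.summation, hGram.summation_single, hGram.adjoint_summation_comp_summation,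
    hGram.norm_summation_sq⟩

/-- If the block-Gram matrix `P` of a family of closed subspaces (blocks: orthogonal
projections `(Hs j)ᗮ → (Hs i)ᗮ`) defines a bounded non-negative self-adjoint operator on the
Hilbert direct sum `⊕_{ℓ²} (Hs i)ᗮ`, then the summation map `ι` extends continuously to the
Hilbert direct sum, satisfies `ι† ∘ ι = P`, and `‖ι‖² = ‖P‖`. -/
theorem stmt11 {H : Type*} [NormedAddCommGroup H] [InnerProductSpace ℂ H] [CompleteSpace H]
    {ι : Type*} [DecidableEq ι] (Hs : ι → Submodule ℂ H) [∀ i, CompleteSpace (Hs i)]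
    (P : lp (fun i => ↥(Hs i)ᗮ) 2 →L[ℂ] lp (fun i => ↥(Hs i)ᗮ) 2)
    (hP : ∀ (j : ι) (v : ↥(Hs j)ᗮ) (i : ι),
      P (lp.single 2 j v) i = Submodule.orthogonalProjection (Hs i)ᗮ (v : H))
    (hPsa : IsSelfAdjoint P)
    (hPnonneg : ∀ x : lp (fun i => ↥(Hs i)ᗮ) 2, 0 ≤ (⟪P x, x⟫_ℂ).re) :
    ∃ ι₀ : lp (fun i => ↥(Hs i)ᗮ) 2 →L[ℂ] H,
      (∀ (i : ι) (v : ↥(Hs i)ᗮ), ι₀ (lp.single 2 i v) = (v : H)) ∧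
      (ContinuousLinearMap.adjoint ι₀).comp ι₀ = P ∧
      ‖ι₀‖ ^ 2 = ‖P‖ :=
  stmt11_general Hs P hP
end
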